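/- arXiv:2501.02398 — 2 statements merged into one kernel-verified Lean document; each statement's English description precedes it below -/
import Mathlib

section
/- Let π be a representation of a C*-algebra A on a Hilbert space H, and let Λ be a subset with complement Λᶜ, giving subalgebras A_Λ and A_{Λᶜ} of A that commute with each other and together generate A. Suppose π(A_Λ)'' ⊆ π(A_{Λᶜ})' ∩ π(A)''. Then the center of the relative commutant π(A_{Λᶜ})' ∩ π(A)'' equals the center of π(A)'': Z(π(A_{Λᶜ})' ∩ π(A)'') = Z(π(A)''). -/
noncomputable section

/- STATEMENT 2: let π be a representation of a C*-algebra A on H, and let A_Λ, A_Λᶜ be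
commuting subalgebras which together generate A, with π(A_Λ)'' ⊆ π(A_Λᶜ)' ∩ π(A)''.
Then Z(π(A_Λᶜ)' ∩ π(A)'') = Z(π(A)''). -/

/-- The center of a subset of B(H), as a set: R ∩ R'. -/
def centerSet {H : Type*} [NormedAddCommGroup H] [InnerProductSpace ℂ H] [CompleteSpace H]
    (R : Set (H →L[ℂ] H)) : Set (H →L[ℂ] H) :=
  R ∩ Set.centralizer R

theorem center_relative_commutant_eq_center
    {A : Type*} [NormedRing A] [StarRing A] [CStarRing A] [NormedAlgebra ℂ A]
    [StarModule ℂ A] [CompleteSpace A]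
    {H : Type*} [NormedAddCommGroup H] [InnerProductSpace ℂ H] [CompleteSpace H]
    (π : A →⋆ₐ[ℂ] (H →L[ℂ] H))
    (S T : StarSubalgebra ℂ A)
    -- the two subalgebras commute with each other
    (hcomm : ∀ x ∈ S, ∀ y ∈ T, x * y = y * x)
    -- together they generate A (the span of products is dense in A)
    (hgen : Dense (Submodule.span ℂ {x : A | ∃ s ∈ S, ∃ t ∈ T, x = s * t} : Set A))
    -- π(A_Λ)'' ⊆ π(A_Λᶜ)' ∩ π(A)''
    (hsub : Set.centralizer (Set.centralizer (⇑π '' (S : Set A))) ⊆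
      Set.centralizer (⇑π '' (T : Set A)) ∩
        Set.centralizer (Set.centralizer (Set.range ⇑π))) :
    centerSet (Set.centralizer (⇑π '' (T : Set A)) ∩
        Set.centralizer (Set.centralizer (Set.range ⇑π))) =
      centerSet (Set.centralizer (Set.centralizer (Set.range ⇑π))) := by
  letI : CStarAlgebra A := { }
  have hπcont : Continuous π := AddMonoidHomClass.continuous_of_bound π 1
    (by simpa using fun a => NonUnitalStarAlgHom.norm_apply_le π a)
  set M : Set (H →L[ℂ] H) := Set.centralizer (Set.centralizer (Set.range ⇑π)) with hM
  set R : Set (H →L[ℂ] H) :=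
    Set.centralizer (⇑π '' (T : Set A)) ∩ M with hRdef
  apply Set.Subset.antisymm
  · rintro x ⟨⟨hxT, hxM⟩, hxR'⟩
    refine ⟨hxM, ?_⟩
    rw [hM, Set.centralizer_centralizer_centralizer]
    rintro y ⟨a, rfl⟩
    -- the set of a with π a commuting with x is a closed submodule containing generators
    let C : Submodule ℂ A :=
      { carrier := {a | π a * x = x * π a}
        add_mem' := by
          intro a b ha hb
          simp only [Set.mem_setOf_eq] at ha hb ⊢
          simp [map_add, add_mul, mul_add, ha, hb]
        zero_mem' := by simp
        smul_mem' := by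
          intro c a ha
          simp only [Set.mem_setOf_eq] at ha ⊢
          simp [map_smul, smul_mul_assoc, mul_smul_comm, ha] }
    have hCclosed : IsClosed (C : Set A) := by
      have : (C : Set A) = (fun a => π a * x - x * π a) ⁻¹' {0} := by
        ext a
        simp [C, sub_eq_zero]
      rw [this]
      exact IsClosed.preimage (by fun_prop) isClosed_singleton
    have hgenC : {x : A | ∃ s ∈ S, ∃ t ∈ T, x = s * t} ⊆ (C : Set A) := by
      rintro _ ⟨s, hs, t, ht, rfl⟩
      have hxs : π s * x = x * π s := by
        refine hxR' (π s) (hsub ?_)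
        exact Set.subset_centralizer_centralizer ⟨s, hs, rfl⟩
      have hxt : π t * x = x * π t := hxT (π t) ⟨t, ht, rfl⟩
      show π (s * t) * x = x * π (s * t)
      rw [map_mul, mul_assoc, hxt, ← mul_assoc, hxs, mul_assoc]
    have hspan : (Submodule.span ℂ {x : A | ∃ s ∈ S, ∃ t ∈ T, x = s * t} : Set A) ⊆
        (C : Set A) := Submodule.span_le.mpr hgenC
    have ha : a ∈ (C : Set A) := by
      have := hgen.closure_eq
      have h2 : a ∈ closure (Submodule.span ℂ {x : A | ∃ s ∈ S, ∃ t ∈ T, x = s * t} : Set A) := by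
        rw [this]; trivial
      exact hCclosed.closure_subset ((closure_mono hspan).trans (by rw [hCclosed.closure_eq]) h2)
    exact ha
  · rintro x ⟨hxM, hxM'⟩
    have hrange : Set.range ⇑π ⊆ M := Set.subset_centralizer_centralizer
    refine ⟨⟨?_, hxM⟩, ?_⟩
    · rintro _ ⟨t, ht, rfl⟩
      exact hxM' _ (hrange ⟨t, rfl⟩)
    · exact Set.centralizer_subset Set.inter_subset_right hxM'
end
end

section
/- Let φ and ψ be states on unital C*-algebras A and B respectively, with ψ pure, and consider the product state ω = φ ⊗ ψ on A ⊗ B with GNS representation π = π_φ ⊗ π_ψ on H_φ ⊗ H_ψ. Let ρ, σ be representations of A on H_φ with ranges in π_φ(A)''. Define representations ρ̂, σ̂ of A ⊗ B on H_φ ⊗ H_ψ by ρ̂(a ⊗ b) = ρ(a) ⊗ π_ψ(b) and similarly for σ̂. Then the intertwiner space {S ∈ π(A ⊗ B)'' : S ρ̂(x) = σ̂(x) S for all x ∈ A ⊗ B, σ̂(1) S ρ̂(1) = S} equals {R ⊗ 1 : R ∈ π_φ(A)'', R ρ(a) = σ(a) R for all a ∈ A, σ(1) R ρ(1) = R}.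 -/
/-
Since π_ψ(B)' = ℂ, an operator S on H_φ ⊗ H_ψ commuting with 1 ⊗ π_ψ(B) has the form R ⊗ 1:
for fixed h, h' ∈ H_φ the compression (k, k') ↦ ⟨h ⊗ k, S (h' ⊗ k')⟩ is an operator on H_ψ
commuting with π_ψ(B), hence a scalar c(h, h'), and c is the compression of S along a unit
vector. Consequently π(A ⊗ B)' = π_φ(A)' ⊗ 1, and R ⊗ 1 lies in π(A ⊗ B)'' iff R ∈ π_φ(A)''.
An intertwiner S from ρ̂ to σ̂ with σ̂(1) S ρ̂(1) = S commutes with 1 ⊗ π_ψ(B), because ρ(1) and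
σ(1) are idempotents and S ρ̂(1 ⊗ b) = σ̂(1 ⊗ b) S; so S = R ⊗ 1, and all conditions on S
descend to R because x ↦ x ⊗ 1 is injective.
-/

noncomputable section

/-- A spatial realization of the Hilbert space tensor product of `H` and `K` on `L`,
together with the two amplification `*`-homomorphisms `x ↦ x ⊗ 1` and `y ↦ 1 ⊗ y`. -/
structure HilbertTensor (H K L : Type*)
    [NormedAddCommGroup H] [InnerProductSpace ℂ H] [CompleteSpace H]
    [NormedAddCommGroup K] [InnerProductSpace ℂ K] [CompleteSpace K]
    [NormedAddCommGroup L] [InnerProductSpace ℂ L] [CompleteSpace L] where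
  tp : H →ₗ[ℂ] K →ₗ[ℂ] L
  inner_tp : ∀ (h h' : H) (k k' : K),
    (inner ℂ (tp h k) (tp h' k') : ℂ) = (inner ℂ h h' : ℂ) * (inner ℂ k k' : ℂ)
  dense_span : Dense (Submodule.span ℂ {z : L | ∃ h k, z = tp h k} : Set L)
  lAct : (H →L[ℂ] H) →⋆ₐ[ℂ] (L →L[ℂ] L)
  rAct : (K →L[ℂ] K) →⋆ₐ[ℂ] (L →L[ℂ] L)
  lAct_tp : ∀ (x : H →L[ℂ] H) (h : H) (k : K), lAct x (tp h k) = tp (x h) k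
  rAct_tp : ∀ (y : K →L[ℂ] K) (h : H) (k : K), rAct y (tp h k) = tp h (y k)

theorem Function.Injective.mem_centralizer_image_iff {F M N : Type*} [Mul M] [Mul N]
    [FunLike F M N] [MulHomClass F M N] {f : F} (hf : Function.Injective f) {S : Set M} {x : M} :
    f x ∈ Set.centralizer (f '' S) ↔ x ∈ Set.centralizer S := by
  simp only [Set.mem_centralizer_iff, Set.forall_mem_image, ← map_mul, hf.eq_iff]

lemma exists_inner_self_eq_one {𝕜 E : Type*} [RCLike 𝕜] [NormedAddCommGroup E]
    [InnerProductSpace 𝕜 E] [Nontrivial E] : ∃ e : E, (inner 𝕜 e e : 𝕜) = 1 := by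
  let _ := NormedSpace.restrictScalars ℝ 𝕜 E
  obtain ⟨e, he⟩ := exists_norm_eq E zero_le_one
  exact ⟨e, by rw [inner_self_eq_norm_sq_to_K, he]; norm_num⟩

namespace HilbertTensor

variable {H K L : Type*}
    [NormedAddCommGroup H] [InnerProductSpace ℂ H] [CompleteSpace H]
    [NormedAddCommGroup K] [InnerProductSpace ℂ K] [CompleteSpace K]
    [NormedAddCommGroup L] [InnerProductSpace ℂ L] [CompleteSpace L]

lemma subsingleton_of_subsingleton_right (T : HilbertTensor H K L) [Subsingleton K] :
    Subsingleton L := by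
  have hspan : Submodule.span ℂ {z : L | ∃ h k, z = T.tp h k} = ⊥ := by
    rw [Submodule.span_eq_bot]
    rintro _ ⟨h, k, rfl⟩
    rw [Subsingleton.elim k 0, map_zero]
  have hdense := T.dense_span
  rw [hspan, Submodule.bot_coe, dense_iff_closure_eq, closure_singleton] at hdense
  have hzero (x : L) : x = 0 := (hdense ▸ Set.mem_univ x : x ∈ ({0} : Set L))
  exact ⟨fun x y => (hzero x).trans (hzero y).symm⟩

variable (T : HilbertTensor H K L)

lemma norm_tp (h : H) (k : K) : ‖T.tp h k‖ = ‖h‖ * ‖k‖ := by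
  have h2 : ‖T.tp h k‖ ^ 2 = (‖h‖ * ‖k‖) ^ 2 := by
    have := T.inner_tp h h k k
    rw [inner_self_eq_norm_sq_to_K, inner_self_eq_norm_sq_to_K, inner_self_eq_norm_sq_to_K,
      ← mul_pow] at this
    exact_mod_cast this
  exact (pow_left_inj₀ (norm_nonneg _) (by positivity) two_ne_zero).1 h2

def tpL (k : K) : H →L[ℂ] L :=
  LinearMap.mkContinuous (T.tp.flip k) ‖k‖ fun h => by
    rw [LinearMap.flip_apply, T.norm_tp, mul_comm]

def tpR (h : H) : K →L[ℂ] L :=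
  LinearMap.mkContinuous (T.tp h) ‖h‖ fun k => by rw [T.norm_tp]

lemma ext_tp {S S' : L →L[ℂ] L}
    (hS : ∀ (h h' : H) (k k' : K),
      (inner ℂ (T.tp h k) (S (T.tp h' k')) : ℂ) = (inner ℂ (T.tp h k) (S' (T.tp h' k')) : ℂ)) :
    S = S' := by
  apply ContinuousLinearMap.ext_on T.dense_span
  rintro z ⟨h', k', rfl⟩
  apply Dense.eq_of_inner_right ℂ T.dense_span
  intro v hv
  induction hv using Submodule.span_induction with
  | mem u hu => obtain ⟨h, k, rfl⟩ := hu; exact hS h h' k k'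
  | zero => simp only [inner_zero_left]
  | add u w _ _ hu hw => simp only [inner_add_left, hu, hw]
  | smul c u _ hu => simp only [inner_smul_left, hu]

lemma inner_tp_lAct (x : H →L[ℂ] H) (h h' : H) (k k' : K) :
    (inner ℂ (T.tp h k) (T.lAct x (T.tp h' k')) : ℂ) = (inner ℂ h (x h') : ℂ) * inner ℂ k k' := by
  rw [T.lAct_tp, T.inner_tp]

lemma lAct_commute_rAct (x : H →L[ℂ] H) (y : K →L[ℂ] K) : Commute (T.lAct x) (T.rAct y) := by
  apply ContinuousLinearMap.ext_on T.dense_span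
  rintro z ⟨h, k, rfl⟩
  simp only [mul_apply_eq_comp, T.lAct_tp, T.rAct_tp]

lemma adjoint_rAct (y : K →L[ℂ] K) :
    ContinuousLinearMap.adjoint (T.rAct y) = T.rAct (ContinuousLinearMap.adjoint y) := by
  rw [← ContinuousLinearMap.star_eq_adjoint, ← map_star, ContinuousLinearMap.star_eq_adjoint]

def sliceLeft (e : K) (S : L →L[ℂ] L) : H →L[ℂ] H :=
  ContinuousLinearMap.adjoint (T.tpL e) ∘L S ∘L T.tpL e

lemma inner_sliceLeft (e : K) (S : L →L[ℂ] L) (h h' : H) :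
    (inner ℂ h (T.sliceLeft e S h') : ℂ) = inner ℂ (T.tp h e) (S (T.tp h' e)) := by
  rw [sliceLeft, ContinuousLinearMap.comp_apply, ContinuousLinearMap.adjoint_inner_right]
  rfl

def sliceRight (h h' : H) (S : L →L[ℂ] L) : K →L[ℂ] K :=
  ContinuousLinearMap.adjoint (T.tpR h) ∘L S ∘L T.tpR h'

lemma inner_sliceRight (h h' : H) (S : L →L[ℂ] L) (k k' : K) :
    (inner ℂ k (T.sliceRight h h' S k') : ℂ) = inner ℂ (T.tp h k) (S (T.tp h' k')) := by
  rw [sliceRight, ContinuousLinearMap.comp_apply, ContinuousLinearMap.adjoint_inner_right]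
  rfl

lemma sliceRight_mem_centralizer {M : Set (K →L[ℂ] K)} {S : L →L[ℂ] L}
    (hS : S ∈ Set.centralizer (T.rAct '' M)) (h h' : H) :
    T.sliceRight h h' S ∈ Set.centralizer M := by
  intro m hm
  ext k'
  refine ext_inner_left ℂ fun k => ?_
  have hSm : T.rAct m * S = S * T.rAct m := hS _ ⟨m, hm, rfl⟩
  calc (inner ℂ k ((m * T.sliceRight h h' S) k') : ℂ)
      = inner ℂ (T.rAct (ContinuousLinearMap.adjoint m) (T.tp h k)) (S (T.tp h' k')) := by
        rw [mul_apply_eq_comp, ← ContinuousLinearMap.adjoint_inner_left, inner_sliceRight,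
          T.rAct_tp]
    _ = inner ℂ (T.tp h k) ((T.rAct m * S) (T.tp h' k')) := by
        rw [← adjoint_rAct, ContinuousLinearMap.adjoint_inner_left, mul_apply_eq_comp]
    _ = inner ℂ k ((T.sliceRight h h' S * m) k') := by
        rw [hSm, mul_apply_eq_comp, mul_apply_eq_comp, T.rAct_tp, inner_sliceRight]

lemma eq_lAct_sliceLeft {M : Set (K →L[ℂ] K)}
    (hM : Set.centralizer M ⊆ {y | ∃ c : ℂ, y = c • (1 : K →L[ℂ] K)})
    {e : K} (he : (inner ℂ e e : ℂ) = 1) {S : L →L[ℂ] L} (hS : S ∈ Set.centralizer (T.rAct '' M)) :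
    S = T.lAct (T.sliceLeft e S) := by
  refine T.ext_tp fun h h' k k' => ?_
  obtain ⟨c, hc⟩ := hM (T.sliceRight_mem_centralizer hS h h')
  have hslice : (inner ℂ h (T.sliceLeft e S h') : ℂ) = c := by
    rw [inner_sliceLeft, ← inner_sliceRight, hc]
    simp only [smul_apply, one_apply_eq_self, inner_smul_right, he, mul_one]
  rw [inner_tp_lAct, hslice, ← inner_sliceRight, hc]
  simp only [smul_apply, one_apply_eq_self, inner_smul_right]

lemma lAct_injective [Nontrivial K] : Function.Injective T.lAct := by
  obtain ⟨e, he⟩ := exists_inner_self_eq_one (𝕜 := ℂ) (E := K)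
  intro x x' hxx'
  ext h'
  refine ext_inner_left ℂ fun h => ?_
  simpa only [inner_tp_lAct, he, mul_one] using
    congrArg (fun W : L →L[ℂ] L => (inner ℂ (T.tp h e) (W (T.tp h' e)) : ℂ)) hxx'

lemma centralizer_image_rAct_subset_range [Nontrivial K] {M : Set (K →L[ℂ] K)}
    (hM : Set.centralizer M ⊆ {y | ∃ c : ℂ, y = c • (1 : K →L[ℂ] K)}) :
    Set.centralizer (T.rAct '' M) ⊆ Set.range T.lAct := by
  obtain ⟨e, he⟩ := exists_inner_self_eq_one (𝕜 := ℂ) (E := K)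
  exact fun S hS => ⟨_, (T.eq_lAct_sliceLeft hM he hS).symm⟩

lemma mem_centralizer_image_rAct_of_intertwines {p q : H →L[ℂ] H} (hp : IsIdempotentElem p)
    (hq : IsIdempotentElem q) {M : Set (K →L[ℂ] K)} {S : L →L[ℂ] L}
    (hS : ∀ m ∈ M, S * (T.lAct p * T.rAct m) = T.lAct q * T.rAct m * S)
    (hpq : T.lAct q * S * T.lAct p = S) :
    S ∈ Set.centralizer (T.rAct '' M) := by
  rintro _ ⟨m, hm, rfl⟩
  have hSp : S * T.lAct p = S := by rw [← hpq, mul_assoc, ← map_mul, hp.eq]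
  have hqS : T.lAct q * S = S := by rw [← hpq, ← mul_assoc, ← mul_assoc, ← map_mul, hq.eq]
  calc T.rAct m * S = T.lAct q * T.rAct m * S := by
        rw [(T.lAct_commute_rAct q m).eq, mul_assoc, hqS]
    _ = S * T.rAct m := by rw [← hS m hm, ← mul_assoc, hSp]

section Representations

variable {A B : Type*} [Semiring A] [Algebra ℂ A] [Star A] [Semiring B] [Algebra ℂ B] [Star B]

lemma centralizer_lAct_mul_rAct [Nontrivial K] (πφ : A →⋆ₐ[ℂ] (H →L[ℂ] H))
    (πψ : B →⋆ₐ[ℂ] (K →L[ℂ] K))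
    (hπψ : Set.centralizer (Set.range ⇑πψ) ⊆ {y | ∃ c : ℂ, y = c • (1 : K →L[ℂ] K)}) :
    Set.centralizer {w : L →L[ℂ] L | ∃ (a : A) (b : B), w = T.lAct (πφ a) * T.rAct (πψ b)} =
      T.lAct '' Set.centralizer (Set.range ⇑πφ) := by
  apply subset_antisymm
  · intro V hV
    obtain ⟨X, rfl⟩ := T.centralizer_image_rAct_subset_range hπψ <| by
      rintro _ ⟨_, ⟨b, rfl⟩, rfl⟩
      exact hV _ ⟨1, b, by rw [map_one, map_one, one_mul]⟩
    refine ⟨X, ?_, rfl⟩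
    rintro _ ⟨a, rfl⟩
    refine T.lAct_injective ?_
    rw [map_mul, map_mul]
    exact hV _ ⟨a, 1, by rw [map_one, map_one, mul_one]⟩
  · rintro _ ⟨X, hX, rfl⟩ _ ⟨a, b, rfl⟩
    rw [mul_assoc, ← (T.lAct_commute_rAct X _).eq, ← mul_assoc, ← map_mul, hX _ ⟨a, rfl⟩,
      map_mul, mul_assoc]

lemma lAct_mem_centralizer_centralizer_iff [Nontrivial K] (πφ : A →⋆ₐ[ℂ] (H →L[ℂ] H))
    (πψ : B →⋆ₐ[ℂ] (K →L[ℂ] K))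
    (hπψ : Set.centralizer (Set.range ⇑πψ) ⊆ {y | ∃ c : ℂ, y = c • (1 : K →L[ℂ] K)})
    (R : H →L[ℂ] H) :
    T.lAct R ∈ Set.centralizer (Set.centralizer
        {w : L →L[ℂ] L | ∃ (a : A) (b : B), w = T.lAct (πφ a) * T.rAct (πψ b)}) ↔
      R ∈ Set.centralizer (Set.centralizer (Set.range ⇑πφ)) := by
  rw [T.centralizer_lAct_mul_rAct πφ πψ hπψ, T.lAct_injective.mem_centralizer_image_iff]

lemma lAct_intertwines_iff [Nontrivial K] {ι : Type*} (f g : ι → H →L[ℂ] H)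
    (πψ : B →⋆ₐ[ℂ] (K →L[ℂ] K)) (R : H →L[ℂ] H) :
    (∀ i b, T.lAct R * (T.lAct (f i) * T.rAct (πψ b)) = T.lAct (g i) * T.rAct (πψ b) * T.lAct R) ↔
      ∀ i, R * f i = g i * R := by
  refine ⟨fun hR i => T.lAct_injective ?_, fun hR i b => ?_⟩
  · simpa only [map_one, mul_one, map_mul] using hR i 1
  · rw [← mul_assoc, ← map_mul, hR, map_mul, mul_assoc, (T.lAct_commute_rAct R _).eq, mul_assoc]

end Representations

end HilbertTensor

theorem stabilized_intertwiner_space_general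
    {A B : Type*}
    [NormedRing A] [StarRing A] [NormedAlgebra ℂ A]
    [NormedRing B] [StarRing B] [NormedAlgebra ℂ B]
    {Hφ Hψ L : Type*}
    [NormedAddCommGroup Hφ] [InnerProductSpace ℂ Hφ] [CompleteSpace Hφ]
    [NormedAddCommGroup Hψ] [InnerProductSpace ℂ Hψ] [CompleteSpace Hψ]
    [NormedAddCommGroup L] [InnerProductSpace ℂ L] [CompleteSpace L]
    (T : HilbertTensor Hφ Hψ L)
    -- GNS representations of the states φ and ψ
    (πφ : A →⋆ₐ[ℂ] (Hφ →L[ℂ] Hφ)) (πψ : B →⋆ₐ[ℂ] (Hψ →L[ℂ] Hψ))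
    -- ψ is pure: its GNS representation is irreducible
    (hpure : Set.centralizer (Set.range ⇑πψ) ⊆ {y | ∃ c : ℂ, y = c • (1 : Hψ →L[ℂ] Hψ)})
    -- ρ, σ are representations of A on H_φ with ranges in π_φ(A)'"'"''"'"'
    (ρ σ : A →⋆ₙₐ[ℂ] (Hφ →L[ℂ] Hφ)) :
    -- the intertwiner space between ρ̂ and σ̂ in π(A ⊗ B)'"'"''"'"' ...
    {S : L →L[ℂ] L |
        S ∈ Set.centralizer (Set.centralizer
          {w : L →L[ℂ] L | ∃ (a : A) (b : B), w = T.lAct (πφ a) * T.rAct (πψ b)}) ∧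
        (∀ (a : A) (b : B),
          S * (T.lAct (ρ a) * T.rAct (πψ b)) = (T.lAct (σ a) * T.rAct (πψ b)) * S) ∧
        T.lAct (σ 1) * S * T.lAct (ρ 1) = S} =
      -- ... equals the image under x ↦ x ⊗ 1 of the intertwiner space between ρ and σ
      ⇑T.lAct '' {R : Hφ →L[ℂ] Hφ |
        R ∈ Set.centralizer (Set.centralizer (Set.range ⇑πφ)) ∧
        (∀ a : A, R * ρ a = σ a * R) ∧ σ 1 * R * ρ 1 = R} := by
  rcases subsingleton_or_nontrivial Hψ with hψ | hψ
  · have := T.subsingleton_of_subsingleton_right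
    ext S
    refine ⟨fun _ => ⟨0, ⟨Set.zero_mem_centralizer, fun _ => ?_, ?_⟩, Subsingleton.elim _ _⟩,
      fun _ => ⟨fun _ _ => Subsingleton.elim _ _, fun _ _ => Subsingleton.elim _ _,
        Subsingleton.elim _ _⟩⟩ <;> simp only [zero_mul, mul_zero]
  ext S
  constructor
  · rintro ⟨hS, hρσ, hσρ⟩
    obtain ⟨R, rfl⟩ := T.centralizer_image_rAct_subset_range hpure <|
      T.mem_centralizer_image_rAct_of_intertwines (IsIdempotentElem.one.map ρ)
        (IsIdempotentElem.one.map σ) (by rintro _ ⟨b, rfl⟩; exact hρσ 1 b) hσρ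
    refine ⟨R, ⟨?_, (T.lAct_intertwines_iff ρ σ πψ R).1 hρσ, T.lAct_injective ?_⟩, rfl⟩
    · exact (T.lAct_mem_centralizer_centralizer_iff πφ πψ hpure R).1 hS
    · rwa [map_mul, map_mul]
  · rintro ⟨R, ⟨hR, hρσ, hσρ⟩, rfl⟩
    exact ⟨(T.lAct_mem_centralizer_centralizer_iff πφ πψ hpure R).2 hR,
      (T.lAct_intertwines_iff ρ σ πψ R).2 hρσ, by rw [← map_mul, ← map_mul, hσρ]⟩

theorem stabilized_intertwiner_space
    {A B : Type*}
    [NormedRing A] [StarRing A] [CStarRing A] [NormedAlgebra ℂ A] [StarModule ℂ A]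
    [CompleteSpace A]
    [NormedRing B] [StarRing B] [CStarRing B] [NormedAlgebra ℂ B] [StarModule ℂ B]
    [CompleteSpace B]
    {Hφ Hψ L : Type*}
    [NormedAddCommGroup Hφ] [InnerProductSpace ℂ Hφ] [CompleteSpace Hφ]
    [NormedAddCommGroup Hψ] [InnerProductSpace ℂ Hψ] [CompleteSpace Hψ]
    [NormedAddCommGroup L] [InnerProductSpace ℂ L] [CompleteSpace L]
    (T : HilbertTensor Hφ Hψ L)
    -- GNS representations of the states φ and ψ
    (φ : A →ₗ[ℂ] ℂ) (ψ : B →ₗ[ℂ] ℂ)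
    (πφ : A →⋆ₐ[ℂ] (Hφ →L[ℂ] Hφ)) (πψ : B →⋆ₐ[ℂ] (Hψ →L[ℂ] Hψ))
    (Ωφ : Hφ) (Ωψ : Hψ)
    (hφ : ∀ a, φ a = (inner ℂ Ωφ (πφ a Ωφ) : ℂ))
    (hψ : ∀ b, ψ b = (inner ℂ Ωψ (πψ b Ωψ) : ℂ))
    (hcycφ : Dense (Submodule.span ℂ (Set.range (fun a => πφ a Ωφ)) : Set Hφ))
    (hcycψ : Dense (Submodule.span ℂ (Set.range (fun b => πψ b Ωψ)) : Set Hψ))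
    -- ψ is pure: its GNS representation is irreducible
    (hpure : Set.centralizer (Set.range ⇑πψ) ⊆ {y | ∃ c : ℂ, y = c • (1 : Hψ →L[ℂ] Hψ)})
    -- ρ, σ are representations of A on H_φ with ranges in π_φ(A)'"'"''"'"'
    (ρ σ : A →⋆ₙₐ[ℂ] (Hφ →L[ℂ] Hφ))
    (hρ : ∀ a, ρ a ∈ Set.centralizer (Set.centralizer (Set.range ⇑πφ)))
    (hσ : ∀ a, σ a ∈ Set.centralizer (Set.centralizer (Set.range ⇑πφ))) :
    -- the intertwiner space between ρ̂ and σ̂ in π(A ⊗ B)'"'"''"'"' ...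
    {S : L →L[ℂ] L |
        S ∈ Set.centralizer (Set.centralizer
          {w : L →L[ℂ] L | ∃ (a : A) (b : B), w = T.lAct (πφ a) * T.rAct (πψ b)}) ∧
        (∀ (a : A) (b : B),
          S * (T.lAct (ρ a) * T.rAct (πψ b)) = (T.lAct (σ a) * T.rAct (πψ b)) * S) ∧
        T.lAct (σ 1) * S * T.lAct (ρ 1) = S} =
      -- ... equals the image under x ↦ x ⊗ 1 of the intertwiner space between ρ and σ
      ⇑T.lAct '' {R : Hφ →L[ℂ] Hφ |
        R ∈ Set.centralizer (Set.centralizer (Set.range ⇑πφ)) ∧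
        (∀ a : A, R * ρ a = σ a * R) ∧ σ 1 * R * ρ 1 = R} :=
  stabilized_intertwiner_space_general T πφ πψ hpure ρ σ
end
end
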